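/- In an ultrametric space (X,d), for all ε ≥ 0 and A ⊆ X, C_ε(A) ⊆ I_ε(C_ε(A)): the ε-closure operator is ε-stable (semantically, this validates the axiom ◇_ε φ → □_ε ◇_ε φ). -/
import Mathlib


def Ieps {X : Type*} [MetricSpace X] (ε : ℝ) (A : Set X) : Set X :=
  {x | ∀ y, dist x y ≤ ε → y ∈ A}

def Ceps {X : Type*} [MetricSpace X] (ε : ℝ) (A : Set X) : Set X :=
  {x | ∃ y ∈ A, dist x y ≤ ε}

theorem Ceps_subset_Ieps_Ceps {X : Type*} [MetricSpace X]
    (hu : ∀ x y z : X, dist x z ≤ max (dist x y) (dist y z))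
    (ε : ℝ) (hε : 0 ≤ ε) (A : Set X) :
    Ceps ε A ⊆ Ieps ε (Ceps ε A) := by
  rintro x ⟨a, ha, hxa⟩ y hxy
  refine ⟨a, ha, ?_⟩
  calc dist y a ≤ max (dist y x) (dist x a) := hu y x a
    _ ≤ ε := by rw [dist_comm y x]; exact max_le hxy hxa
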